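/- Let p be a language model over Δ* and D a prefix-closed subset of Δ* whose membership is decided by the bigram condition. With the locally constrained model ℓ defined by masking noncanonical continuations and renormalizing at each step (as above), every normalizer satisfies 0 < λ(y) ≤ 1 for prefixes y of canonical strings, and consequently ℓ(y) ≥ p(y) for every y ∈ D. -/

import Mathlib

/-! Masking at a prefix `y` keeps a sub-collection of the next-step probabilities, so their
total `λ(y)` is at most `1`, and dividing by it can only raise each surviving conditional.
Along a string of `D` every factor of the autoregressive product survives the mask, and a
product of nonnegative factors is monotone in each of them. -/

open Classical

noncomputable section

/-- Product of next-token conditionals `∏_t pt(y_t | y_{<t})`. -/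
def chainProd {Δ : Type*} (pt : List Δ → Δ → ℝ) : List Δ → List Δ → ℝ
  | _, [] => 1
  | acc, d :: rest => pt acc d * chainProd pt (acc ++ [d]) rest

/-- Autoregressive string probability. -/
def prob {Δ : Type*} (pe : List Δ → ℝ) (pt : List Δ → Δ → ℝ) (y : List Δ) : ℝ :=
  chainProd pt [] y * pe y

/-- Local normalizer `λ(y)`. -/
def lam {Δ : Type*} [Fintype Δ] (D : Set (List Δ)) (pe : List Δ → ℝ)
    (pt : List Δ → Δ → ℝ) (y : List Δ) : ℝ :=
  (if y ∈ D then pe y else 0) + ∑ d : Δ, if y ++ [d] ∈ D then pt y d else 0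

/-- Locally constrained EOS conditional. -/
def localEos {Δ : Type*} [Fintype Δ] (D : Set (List Δ)) (pe : List Δ → ℝ)
    (pt : List Δ → Δ → ℝ) (y : List Δ) : ℝ :=
  (if y ∈ D then pe y else 0) / lam D pe pt y

/-- Locally constrained token conditional. -/
def localTok {Δ : Type*} [Fintype Δ] (D : Set (List Δ)) (pe : List Δ → ℝ)
    (pt : List Δ → Δ → ℝ) (y : List Δ) (d : Δ) : ℝ :=
  (if y ++ [d] ∈ D then pt y d else 0) / lam D pe pt y

def IsPrefixClosed {Δ : Type*} (D : Set (List Δ)) : Prop :=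
  ∀ a b : List Δ, a ++ b ∈ D → a ∈ D

theorem isPrefixClosed_setOf_isChain {Δ : Type*} (R : Δ → Δ → Prop) :
    IsPrefixClosed {l : List Δ | List.IsChain R l} :=
  fun _ b hab => List.IsChain.prefix hab ⟨b, rfl⟩

theorem chainProd_nonneg {Δ : Type*} {pt : List Δ → Δ → ℝ} (hpt : ∀ y d, 0 ≤ pt y d) :
    ∀ acc y, 0 ≤ chainProd pt acc y
  | _, [] => zero_le_one
  | acc, d :: rest => mul_nonneg (hpt acc d) (chainProd_nonneg hpt (acc ++ [d]) rest)

theorem chainProd_mul_le_chainProd_mul {Δ : Type*} {D : Set (List Δ)} (hD : IsPrefixClosed D)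
    {pe qe : List Δ → ℝ} {pt qt : List Δ → Δ → ℝ}
    (hpe : ∀ y, 0 ≤ pe y) (hpt : ∀ y d, 0 ≤ pt y d)
    (hle_eos : ∀ y ∈ D, pe y ≤ qe y) (hle_tok : ∀ y d, y ++ [d] ∈ D → pt y d ≤ qt y d) :
    ∀ acc y, acc ++ y ∈ D →
      chainProd pt acc y * pe (acc ++ y) ≤ chainProd qt acc y * qe (acc ++ y)
  | acc, [], h => by
    simpa only [chainProd, List.append_nil, one_mul] using hle_eos acc (by simpa using h)
  | acc, d :: rest, h => by
    have h' : (acc ++ [d]) ++ rest ∈ D := by simpa using h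
    have ih := chainProd_mul_le_chainProd_mul hD hpe hpt hle_eos hle_tok (acc ++ [d]) rest h'
    have htok := hle_tok acc d (hD _ _ h')
    simp only [chainProd, mul_assoc, List.append_assoc, List.cons_append, List.nil_append] at ih ⊢
    exact mul_le_mul htok ih (mul_nonneg (chainProd_nonneg hpt _ _) (hpe _))
      ((hpt acc d).trans htok)

theorem prob_le_prob {Δ : Type*} {D : Set (List Δ)} (hD : IsPrefixClosed D)
    {pe qe : List Δ → ℝ} {pt qt : List Δ → Δ → ℝ}
    (hpe : ∀ y, 0 ≤ pe y) (hpt : ∀ y d, 0 ≤ pt y d)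
    (hle_eos : ∀ y ∈ D, pe y ≤ qe y) (hle_tok : ∀ y d, y ++ [d] ∈ D → pt y d ≤ qt y d)
    {y : List Δ} (hy : y ∈ D) : prob pe pt y ≤ prob qe qt y :=
  chainProd_mul_le_chainProd_mul hD hpe hpt hle_eos hle_tok [] y hy

section Local

variable {Δ : Type*} [Fintype Δ] {D : Set (List Δ)} {pe : List Δ → ℝ} {pt : List Δ → Δ → ℝ}

theorem lam_le_one (hpe : ∀ y, 0 ≤ pe y) (hpt : ∀ y d, 0 ≤ pt y d)
    (hsum : ∀ y, pe y + ∑ d : Δ, pt y d = 1) (y : List Δ) : lam D pe pt y ≤ 1 :=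
  calc lam D pe pt y ≤ pe y + ∑ d : Δ, pt y d := by
        unfold lam
        gcongr with d
        · split_ifs <;> simp [hpe y]
        · split_ifs <;> simp [hpt y d]
    _ = 1 := hsum y

theorem le_localEos {y : List Δ} (hy : y ∈ D) (hpe : 0 ≤ pe y) (hlam : 0 < lam D pe pt y)
    (hlam_le : lam D pe pt y ≤ 1) : pe y ≤ localEos D pe pt y := by
  rw [localEos, if_pos hy]
  exact le_div_self hpe hlam hlam_le

theorem le_localTok {y : List Δ} {d : Δ} (hyd : y ++ [d] ∈ D) (hpt : 0 ≤ pt y d)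
    (hlam : 0 < lam D pe pt y) (hlam_le : lam D pe pt y ≤ 1) :
    pt y d ≤ localTok D pe pt y d := by
  rw [localTok, if_pos hyd]
  exact le_div_self hpt hlam hlam_le

end Local

theorem stmt10 {Δ : Type*} [Fintype Δ] (B : Set (Δ × Δ))
    (D : Set (List Δ))
    (hD : D = {l : List Δ | List.Chain' (fun a b => (a, b) ∈ B) l})
    (pe : List Δ → ℝ) (pt : List Δ → Δ → ℝ)
    (hpe : ∀ y, 0 ≤ pe y) (hpt : ∀ y d, 0 ≤ pt y d)
    (hsum : ∀ y, pe y + ∑ d : Δ, pt y d = 1)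
    (hlampos : ∀ y ∈ D, 0 < lam D pe pt y) :
    (∀ y ∈ D, 0 < lam D pe pt y ∧ lam D pe pt y ≤ 1) ∧
    (∀ y ∈ D, prob pe pt y ≤ prob (localEos D pe pt) (localTok D pe pt) y) := by
  have hprefix : IsPrefixClosed D := hD ▸ isPrefixClosed_setOf_isChain _
  have hlam_le := lam_le_one (D := D) hpe hpt hsum
  refine ⟨fun y hy => ⟨hlampos y hy, hlam_le y⟩, fun y hy => ?_⟩
  refine prob_le_prob hprefix hpe hpt (fun y hy => ?_) (fun y d hyd => ?_) hy
  · exact le_localEos hy (hpe y) (hlampos y hy) (hlam_le y)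
  · exact le_localTok hyd (hpt y d) (hlampos y (hprefix _ _ hyd)) (hlam_le y)

end
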